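/- Let δ ≥ 6 be an integer, let 𝐮 be a standard sequence over {a, b} whose slope has a continued fraction expansion of the form θ = [0, 1, ⌊δ/2⌋, a₃, a₄, …], and let 𝐱_{2δ} = colour(𝐮, (12⋯δ)^ω, (1′2′⋯δ′)^ω). Then for any factor of 𝐱_{2δ} of length 2 both of whose letters belong to {1′, …, δ′}, the distance between any two distinct occurrences of this factor in 𝐱_{2δ} is greater than 4δ−4. -/

import Mathlib

open Filter
open scoped ENNReal

namespace BalancedCE

variable {α : Type*} {β : Type*}

/-- The factor of `v` of length `n` starting at position `i`. -/
def factorAt (v : ℕ → α) (i n : ℕ) : List α := (List.range n).map fun k => v (i + k)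

/-- `u` is a factor of the sequence `v`. -/
def IsFactor (v : ℕ → α) (u : List α) : Prop := ∃ i, factorAt v i u.length = u

/-- The word `w` occurs in the sequence `v` at position `i`. -/
def OccursAt (v : ℕ → α) (w : List α) (i : ℕ) : Prop := factorAt v i w.length = w

/-- A sequence is balanced if counts of each letter in equal-length factors differ by at most 1. -/
def Balanced [DecidableEq α] (v : ℕ → α) : Prop :=
  ∀ (a : α) (u w : List α), IsFactor v u → IsFactor v w → u.length = w.length →
    |(u.count a : ℤ) - (w.count a : ℤ)| ≤ 1

def EventuallyPeriodic (v : ℕ → α) : Prop :=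
  ∃ p, 0 < p ∧ ∃ N, ∀ n, N ≤ n → v (n + p) = v n

def Recurrent (v : ℕ → α) : Prop :=
  ∀ u : List α, IsFactor v u → ∀ N : ℕ, ∃ i, N ≤ i ∧ OccursAt v u i

/-- `i < j` are consecutive occurrences of the letter `a` in `v`. -/
def ConsecOcc (v : ℕ → α) (a : α) (i j : ℕ) : Prop :=
  i < j ∧ v i = a ∧ v j = a ∧ ∀ k, i < k → k < j → v k ≠ a

/-- `p` is a period of the finite word `z` (i.e. `z` is a prefix of `u^ω` with `|u| = p`). -/
def IsPeriod (z : List α) (p : ℕ) : Prop :=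
  0 < p ∧ ∀ i, i + p < z.length → z[i]? = z[i + p]?

/-- The minimal period of a finite word. -/
noncomputable def minPeriod (z : List α) : ℕ := sInf {p | IsPeriod z p}

/-- The exponent of a finite word: its length divided by its minimal period. -/
noncomputable def expE (z : List α) : ℝ≥0∞ := (z.length : ℝ≥0∞) / (minPeriod z : ℝ≥0∞)

/-- The critical exponent of a sequence: the supremum of exponents of nonempty factors. -/
noncomputable def criticalExponent (v : ℕ → α) : ℝ≥0∞ :=
  ⨆ (z : List α) (_ : IsFactor v z ∧ z ≠ []), expE z

/-- A Pansiot sequence over a `d`-letter alphabet. -/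
def Pansiot (d : ℕ) (v : ℕ → α) : Prop :=
  (∀ i : ℕ, (factorAt v i (d - 1)).Nodup) ∧
  ∀ (a : α) (i j : ℕ), ConsecOcc v a i j → v (i + 1) ≠ v (j + 1)

/-- The letter `a` has frequency `ρ` in the sequence `v`. -/
def HasFreq [DecidableEq α] (v : ℕ → α) (a : α) (ρ : ℝ) : Prop :=
  Tendsto (fun n => ((factorAt v 0 n).count a : ℝ) / n) atTop (nhds ρ)

/-- Factor complexity of a sequence. -/
noncomputable def complexity (v : ℕ → α) (n : ℕ) : ℕ :=
  Set.ncard {u : List α | IsFactor v u ∧ u.length = n}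

/-- Sturmian sequences: aperiodic binary sequences of factor complexity `n + 1`.
Convention: the letter `a` is `false`, the letter `b` is `true`. -/
def Sturmian (u : ℕ → Bool) : Prop :=
  ¬ EventuallyPeriodic u ∧ ∀ n, complexity u n = n + 1

/-- Prepending a letter to a sequence. -/
def consSeq (c : α) (v : ℕ → α) : ℕ → α := fun n =>
  match n with
  | 0 => c
  | Nat.succ m => v m

/-- A standard sequence: a Sturmian sequence `u` such that `a·u` and `b·u` are Sturmian. -/
def IsStandard (u : ℕ → Bool) : Prop :=
  Sturmian u ∧ Sturmian (consSeq false u) ∧ Sturmian (consSeq true u)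

/-- The slope of a binary sequence, with the convention `ρ_b > ρ_a` (`a = false`, `b = true`). -/
def HasSlope (u : ℕ → Bool) (θ : ℝ) : Prop :=
  ∃ ρa ρb : ℝ, HasFreq u false ρa ∧ HasFreq u true ρb ∧ ρa < ρb ∧ θ = ρa / ρb

/-- `θ` has the (infinite) continued fraction expansion `[0; a 1, a 2, a 3, …]`:
there are complete quotients' fractional parts `t n ∈ (0,1)` with `t 0 = θ` and
`1 / t n = a (n+1) + t (n+1)` for all `n`. (The value `a 0` is irrelevant.) -/
def HasCF (θ : ℝ) (a : ℕ → ℕ) : Prop :=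
  ∃ t : ℕ → ℝ, t 0 = θ ∧ ∀ n, 0 < t n ∧ t n < 1 ∧ 1 / t n = (a (n + 1) : ℝ) + t (n + 1)

/-- Number of positions `< n` where `u` takes the value `c`. -/
def countBefore (u : ℕ → Bool) (c : Bool) (n : ℕ) : ℕ :=
  ((List.range n).filter fun i => u i = c).length

/-- The colouring of a binary sequence `u` by `y` (on the `a = false` positions)
and `y'` (on the `b = true` positions). -/
def colour (u : ℕ → Bool) (y : ℕ → α) (y' : ℕ → β) : ℕ → α ⊕ β := fun n =>
  if u n = false then Sum.inl (y (countBefore u false n))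
  else Sum.inr (y' (countBefore u true n))

/-- A constant gap sequence: periodic, and consecutive occurrences of each occurring
letter are at a constant distance. -/
def ConstantGap (y : ℕ → α) : Prop :=
  (∃ p, 0 < p ∧ ∀ n, y (n + p) = y n) ∧
  ∀ c : α, (∃ i, y i = c) → ∃ g, 0 < g ∧ ∀ i j, ConsecOcc y c i j → j - i = g

/-- The discolouration (projection) map: letters of the first alphabet go to `a = false`,
letters of the second alphabet go to `b = true`. -/
def proj : α ⊕ β → Bool := Sum.elim (fun _ => false) (fun _ => true)

/-- `v` is a return word to `w` in the sequence `z`. -/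
def IsReturnWord (z : ℕ → α) (w v : List α) : Prop :=
  ∃ i j : ℕ, i < j ∧ OccursAt z w i ∧ OccursAt z w j ∧
    (∀ k, i < k → k < j → ¬ OccursAt z w k) ∧ v = factorAt z i (j - i)

def RightSpecial (z : ℕ → α) (w : List α) : Prop :=
  ∃ a b : α, a ≠ b ∧ IsFactor z (w ++ [a]) ∧ IsFactor z (w ++ [b])

def LeftSpecial (z : ℕ → α) (w : List α) : Prop :=
  ∃ a b : α, a ≠ b ∧ IsFactor z (a :: w) ∧ IsFactor z (b :: w)

def Bispecial (z : ℕ → α) (w : List α) : Prop := LeftSpecial z w ∧ RightSpecial z w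

/-- `o` enumerates, in increasing order, all occurrences of `w` in `z`. -/
def IsOccEnum (z : ℕ → α) (w : List α) (o : ℕ → ℕ) : Prop :=
  StrictMono o ∧ (∀ n, OccursAt z w (o n)) ∧ ∀ i, OccursAt z w i → ∃ n, o n = i

/-- The derived sequence of `z` with respect to the occurrence enumeration `o` of a factor:
its `n`-th letter is the return word between the `n`-th and `(n+1)`-st occurrences. -/
def derivedSeq (z : ℕ → α) (o : ℕ → ℕ) : ℕ → List α :=
  fun n => factorAt z (o n) (o (n + 1) - o n)

/-- The slope of a sequence over a two-letter alphabet: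
the ratio of the smaller letter frequency to the larger one. -/
def HasSlope2 {γ : Type*} [DecidableEq γ] (z : ℕ → γ) (θ : ℝ) : Prop :=
  ∃ (c c' : γ) (ρ ρ' : ℝ), c ≠ c' ∧ (∀ n, z n = c ∨ z n = c') ∧
    HasFreq z c ρ ∧ HasFreq z c' ρ' ∧ ρ < ρ' ∧ θ = ρ / ρ'

/-- The purely cyclic constant gap sequence `(0 1 ⋯ (δ-1))^ω` over `ZMod δ`. -/
def cyc (δ : ℕ) : ℕ → ZMod δ := fun n => (n : ZMod δ)

/-- The colouring `colour(u, (1 2 ⋯ δ)^ω, (1' 2' ⋯ δ')^ω)` over `2δ` letters. -/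
def colourCyc (δ : ℕ) (u : ℕ → Bool) : ℕ → ZMod δ ⊕ ZMod δ := colour u (cyc δ) (cyc δ)

/-!
Since `ρa < ρb` and the complexity is `n + 1`, the factor `aa` does not occur. Hence consecutive
occurrences of `bb` are `2γ + 1` apart, separated by `b (ba)^γ`, which contains `γ + 1` letters
`b`. Two gap sizes differing by `2` would give two
distinct right special factors of the same length, so gaps take at most two consecutive values,
and comparing frequencies with `θ = [0; 1, A, …]`, `A = ⌊δ/2⌋`, pins them to `{A, A + 1}`.
A factor `x'y'` sits on an occurrence of `bb`; between two occurrences of it lie `m ≥ 1` gaps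
carrying `S` letters `b` with `δ ∣ S`. As `S = δ` is impossible, `S ≥ 2δ`, and the distance
`2S - m ≥ (2A + 1) S / (A + 1)` exceeds `4δ - 4`.
-/

section Words

variable {γ : Type*} (v : ℕ → γ)

@[simp] lemma length_factorAt (i n : ℕ) : (factorAt v i n).length = n := by
  simp [factorAt]

lemma factorAt_succ (i n : ℕ) : factorAt v i (n + 1) = factorAt v i n ++ [v (i + n)] := by
  simp [factorAt, List.range_succ]

lemma factorAt_two (i : ℕ) : factorAt v i 2 = [v i, v (i + 1)] := by
  simp [factorAt, List.range_succ]

lemma factorAt_eq_factorAt_iff {i j n : ℕ} :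
    factorAt v i n = factorAt v j n ↔ ∀ k < n, v (i + k) = v (j + k) := by
  simp [factorAt, List.map_inj_left]

lemma isFactor_two_iff {x y : γ} : IsFactor v [x, y] ↔ ∃ i, v i = x ∧ v (i + 1) = y := by
  simp [IsFactor, factorAt_two]

lemma isFactor_factorAt_append (i n : ℕ) {c : γ} (hc : v (i + n) = c) :
    IsFactor v (factorAt v i n ++ [c]) :=
  ⟨i, by simp [factorAt_succ, hc]⟩

lemma card_le_complexity [Finite γ] {n : ℕ} (s : Finset (List γ))
    (hs : ∀ z ∈ s, IsFactor v z ∧ z.length = n) : s.card ≤ complexity v n := by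
  rw [complexity, ← Set.ncard_coe_finset]
  exact Set.ncard_le_ncard (fun z hz => hs z hz)
    ((List.finite_length_eq γ n).subset fun _ hz => hz.2)

lemma RightSpecial.eq_of_complexity {n : ℕ} (hn : complexity v n = n + 1)
    (hn₁ : complexity v (n + 1) = n + 2) {z₁ z₂ : List γ}
    (h₁ : RightSpecial v z₁) (h₂ : RightSpecial v z₂)
    (hl₁ : z₁.length = n) (hl₂ : z₂.length = n) : z₁ = z₂ := by
  by_contra hne
  obtain ⟨a₁, b₁, hab₁, ha₁, hb₁⟩ := h₁
  obtain ⟨a₂, b₂, hab₂, ha₂, hb₂⟩ := h₂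
  set F : ℕ → Set (List γ) := fun k => {z | IsFactor v z ∧ z.length = k}
  have hF : ∀ k, complexity v k = (F k).ncard := fun _ => rfl
  have hfin : (F (n + 1)).Finite := Set.finite_of_ncard_ne_zero (by rw [← hF, hn₁]; omega)
  have happ : ∀ {x y : List γ} {c d : γ}, x.length = n → y.length = n →
      x ++ [c] = y ++ [d] → x = y := fun hx hy h => List.append_inj_left h (hx.trans hy.symm)
  -- Deleting one extension of each of `z₁`, `z₂` keeps `take n` onto the factors of length `n`.
  set S := F (n + 1) \ {z₁ ++ [a₁], z₂ ++ [a₂]}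
  have hsurj : F n ⊆ (·.take n) '' S := by
    rintro z ⟨⟨i, hi⟩, hz⟩
    suffices ∃ c, IsFactor v (z ++ [c]) ∧ z ++ [c] ≠ z₁ ++ [a₁] ∧ z ++ [c] ≠ z₂ ++ [a₂] by
      obtain ⟨c, hc, hc₁, hc₂⟩ := this
      exact ⟨z ++ [c], ⟨⟨hc, by simp [hz]⟩, by simp [hc₁, hc₂]⟩, by simp [← hz]⟩
    by_cases hz₁ : z = z₁
    · subst hz₁
      exact ⟨b₁, hb₁, by simpa using hab₁.symm, fun h => hne (happ hz hl₂ h)⟩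
    by_cases hz₂ : z = z₂
    · subst hz₂
      exact ⟨b₂, hb₂, fun h => hne (happ hz hl₁ h).symm, by simpa using hab₂.symm⟩
    refine ⟨v (i + n), ?_, fun h => hz₁ (happ hz hl₁ h), fun h => hz₂ (happ hz hl₂ h)⟩
    rw [← hi, hz]
    exact isFactor_factorAt_append v i n rfl
  have hpair : ({z₁ ++ [a₁], z₂ ++ [a₂]} : Set (List γ)).ncard = 2 :=
    Set.ncard_pair fun h => hne (happ hl₁ hl₂ h)
  have hsub : ({z₁ ++ [a₁], z₂ ++ [a₂]} : Set (List γ)) ⊆ F (n + 1) := by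
    rintro _ (rfl | rfl)
    · exact ⟨ha₁, by simp [hl₁]⟩
    · exact ⟨ha₂, by simp [hl₂]⟩
  have := (Set.ncard_le_ncard hsurj ((hfin.sdiff).image _)).trans
    (Set.ncard_image_le hfin.sdiff)
  rw [Set.ncard_sdiff hsub, hpair, ← hF, ← hF, hn, hn₁] at this
  omega

end Words

section Counting

variable (u : ℕ → Bool)

lemma countBefore_eq_card (c : Bool) (n : ℕ) :
    countBefore u c n = ((Finset.range n).filter (fun i => u i = c)).card := rfl

lemma countBefore_succ (c : Bool) (n : ℕ) :
    countBefore u c (n + 1) = countBefore u c n + if u n = c then 1 else 0 := by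
  simp only [countBefore_eq_card, Finset.range_add_one, Finset.filter_insert]
  split <;> simp [Finset.card_insert_of_notMem]

lemma countBefore_add_le (c : Bool) (n k : ℕ) :
    countBefore u c (n + k) ≤ countBefore u c n + k := by
  induction k with
  | zero => rfl
  | succ k ih => rw [← add_assoc, countBefore_succ]; split <;> omega

lemma countBefore_false_add_true (n : ℕ) :
    countBefore u false n + countBefore u true n = n := by
  induction n with
  | zero => rfl
  | succ n ih => rw [countBefore_succ, countBefore_succ]; cases u n <;> simp <;> omega

lemma hasFreq_iff {c : Bool} {ρ : ℝ} :
    HasFreq u c ρ ↔ Tendsto (fun n => (countBefore u c n : ℝ) / n) atTop (nhds ρ) := by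
  have : ∀ n, (factorAt u 0 n).count c = countBefore u c n := fun n => by
    simp only [factorAt, countBefore, List.count, List.countP_eq_length_filter, List.filter_map,
      List.length_map, zero_add, Function.comp_def]
    exact congrArg List.length <| List.filter_congr fun i _ => by cases u i <;> cases c <;> rfl
  simp only [HasFreq, this]

variable {u}

lemma countBefore_le_of_forall_succ {c c' : Bool} (h : ∀ k, u k = c → u (k + 1) = c') (n : ℕ) :
    countBefore u c n ≤ countBefore u c' (n + 1) := by
  rw [countBefore_eq_card, countBefore_eq_card]
  refine Finset.card_le_card_of_injOn (· + 1) (fun k hk => ?_) (fun _ _ _ _ => Nat.succ_inj.mp)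
  simp only [Finset.coe_filter, Finset.mem_range, Set.mem_ofPred_eq] at hk ⊢
  exact ⟨by omega, h k hk.2⟩

lemma HasFreq.mul_le_mul_of_frequently {c c' : Bool} {ρ ρ' : ℝ} (hc : HasFreq u c ρ)
    (hc' : HasFreq u c' ρ') {p q K : ℕ}
    (h : ∃ᶠ n in atTop, p * countBefore u c n ≤ q * countBefore u c' n + K) :
    (p : ℝ) * ρ ≤ q * ρ' := by
  rw [hasFreq_iff] at hc hc'
  by_contra! hlt
  have hlim : Tendsto (fun n : ℕ => (p : ℝ) * (countBefore u c n / n)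
      - (q * (countBefore u c' n / n) + K / n)) atTop (nhds (p * ρ - (q * ρ' + 0))) :=
    (hc.const_mul _).sub ((hc'.const_mul _).add (tendsto_const_div_atTop_nhds_zero_nat _))
  have hpos := hlim.eventually (lt_mem_nhds (by linarith : (0 : ℝ) < p * ρ - (q * ρ' + 0)))
  obtain ⟨n, hn, hpos, hn0⟩ := (h.and_eventually (hpos.and (eventually_gt_atTop 0))).exists
  have hn0 : (0 : ℝ) < n := by exact_mod_cast hn0
  have hn : (p : ℝ) * countBefore u c n ≤ q * countBefore u c' n + K := by exact_mod_cast hn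
  have : (p : ℝ) * (countBefore u c n / n) - (q * (countBefore u c' n / n) + K / n)
      = (p * countBefore u c n - (q * countBefore u c' n + K)) / n := by
    field_simp
  rw [this] at hpos
  linarith [div_nonpos_of_nonpos_of_nonneg (sub_nonpos.mpr hn) hn0.le]

end Counting

section Slope

lemma HasCF.exists_inv_eq_one_add {θ : ℝ} {a : ℕ → ℕ} (hcf : HasCF θ a) (ha1 : a 1 = 1) :
    ∃ t, 0 < θ ∧ θ⁻¹ = 1 + t ∧ a 2 * t < 1 ∧ 1 < (a 2 + 1) * t := by
  obtain ⟨t, rfl, ht⟩ := hcf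
  obtain ⟨hθ, -, hθt⟩ := ht 0
  obtain ⟨ht₁, -, ht₁t⟩ := ht 1
  obtain ⟨ht₂, ht₂', -⟩ := ht 2
  rw [one_div, ha1, Nat.cast_one] at hθt
  rw [one_div, inv_eq_iff_eq_inv] at ht₁t
  have : (a 2 + t 2) * t 1 = 1 := by rw [ht₁t]; exact mul_inv_cancel₀ (by positivity)
  exact ⟨t 1, hθ, hθt, by nlinarith, by nlinarith⟩

lemma HasSlope.exists_freq_bounds {u : ℕ → Bool} {θ : ℝ} {a : ℕ → ℕ} (hθ : HasSlope u θ)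
    (hcf : HasCF θ a) (ha1 : a 1 = 1) :
    ∃ ρa ρb, HasFreq u false ρa ∧ HasFreq u true ρb ∧ ρa < ρb ∧
      a 2 * ρb < (a 2 + 1) * ρa ∧ (a 2 + 2) * ρa < (a 2 + 1) * ρb := by
  obtain ⟨ρa, ρb, hfa, hfb, hab, rfl⟩ := hθ
  obtain ⟨t, hθ, hinv, ht₁, ht₂⟩ := hcf.exists_inv_eq_one_add ha1
  have hθ₁ : ρa / ρb < 1 := by
    rw [← inv_inv (ρa / ρb), hinv]; exact inv_lt_one_of_one_lt₀ (by nlinarith)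
  have hρb : 0 < ρb := by
    by_contra! h
    rcases h.eq_or_lt with h | h
    · simp [h] at hθ
    · linarith [(div_lt_one_of_neg h).mp hθ₁]
  have hρa : 0 < ρa := (div_pos_iff_of_pos_right hρb).mp hθ
  have hρ : ρb = (1 + t) * ρa := by rw [← hinv, inv_div, div_mul_cancel₀ _ hρa.ne']
  refine ⟨ρa, ρb, hfa, hfb, hab, ?_, ?_⟩ <;> rw [hρ] <;> nlinarith

end Slope

section LocalStructure

lemma eventuallyPeriodic_of_eventually_eq {γ : Type*} {v : ℕ → γ} (N : ℕ) (c : γ)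
    (h : ∀ n ≥ N, v n = c) : EventuallyPeriodic v :=
  ⟨1, one_pos, N, fun n hn => by rw [h n hn, h (n + 1) (by omega)]⟩

variable {u : ℕ → Bool}

lemma eventuallyPeriodic_of_alternating (N : ℕ) (h : ∀ n ≥ N, u (n + 1) ≠ u n) :
    EventuallyPeriodic u :=
  ⟨2, two_pos, N, fun n hn => by
    have h₁ := h n hn
    have h₂ := h (n + 1) (by omega)
    revert h₁ h₂
    cases u n <;> cases u (n + 1) <;> cases u (n + 1 + 1) <;> simp⟩

lemma exists_eq_and_succ_eq_not (hap : ¬ EventuallyPeriodic u) (c : Bool) :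
    ∃ i, u i = c ∧ u (i + 1) = !c := by
  by_contra! h
  by_cases hc : ∃ i, u i = c
  · obtain ⟨i, hi⟩ := hc
    refine hap (eventuallyPeriodic_of_eventually_eq i c fun n hn => ?_)
    induction n, hn using Nat.le_induction with
    | base => exact hi
    | succ m _ hm => simpa using h m hm
  · push Not at hc
    exact hap (eventuallyPeriodic_of_eventually_eq 0 (!c) fun n _ => Bool.eq_not_iff.mpr (hc n))

def BB (u : ℕ → Bool) (k : ℕ) : Prop := u k = true ∧ u (k + 1) = true

lemma Sturmian.succ_eq_true_of_eq_false (hu : Sturmian u) {ρa ρb : ℝ} (hfa : HasFreq u false ρa)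
    (hfb : HasFreq u true ρb) (hab : ρa < ρb) {k : ℕ} (hk : u k = false) : u (k + 1) = true := by
  by_contra hk₁
  simp only [Bool.not_eq_true] at hk₁
  -- With `aa`, `ab` and `ba` occurring, complexity `3` leaves no room for `bb`.
  have hnoBB : ∀ m, ¬ BB u m := by
    rintro m ⟨hm, hm₁⟩
    obtain ⟨i, hi, hi₁⟩ := exists_eq_and_succ_eq_not hu.1 false
    obtain ⟨i', hi', hi₁'⟩ := exists_eq_and_succ_eq_not hu.1 true
    have := card_le_complexity u (n := 2)
      {[false, false], [false, true], [true, false], [true, true]} (by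
        simp only [Finset.mem_insert, Finset.mem_singleton]
        rintro z (rfl | rfl | rfl | rfl) <;> refine ⟨(isFactor_two_iff u).mpr ?_, rfl⟩
        exacts [⟨k, hk, hk₁⟩, ⟨i, hi, hi₁⟩, ⟨i', hi', hi₁'⟩, ⟨m, hm, hm₁⟩])
    rw [hu.2] at this
    exact absurd this (by decide)
  have hcount : ∀ n, 1 * countBefore u true n ≤ 1 * countBefore u false n + 1 := fun n => by
    have := countBefore_le_of_forall_succ (c' := false)
      (fun m hm => by simpa using fun h => hnoBB m ⟨hm, h⟩) n
    linarith [countBefore_add_le u false n 1]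
  have := hfb.mul_le_mul_of_frequently hfa (Frequently.of_forall hcount)
  simp only [Nat.cast_one, one_mul] at this
  linarith

end LocalStructure

section Gaps

variable {u : ℕ → Bool}

/-- `u` reads `b (ba)^γ bb` from position `k`. -/
def HasGap (u : ℕ → Bool) (k γ : ℕ) : Prop :=
  BB u k ∧ BB u (k + 2 * γ + 1) ∧ ∀ s, 1 ≤ s → s ≤ 2 * γ + 1 → u (k + s) = decide (s % 2 = 1)

lemma exists_hasGap_of_consecutive (hAA : ∀ k, u k = false → u (k + 1) = true) {k k' : ℕ}
    (hk : BB u k) (hk' : BB u k') (hlt : k < k') (hcons : ∀ t, k < t → t < k' → ¬ BB u t) :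
    ∃ γ, k' = k + 2 * γ + 1 ∧ HasGap u k γ := by
  have hpat : ∀ s, 1 ≤ s → s ≤ k' - k → u (k + s) = decide (s % 2 = 1) := by
    intro s hs₁ hs₂
    induction s, hs₁ using Nat.le_induction with
    | base => simpa using hk.2
    | succ s hs ih =>
      have ih := ih (by omega)
      rw [← add_assoc]
      cases hus : u (k + s)
      · rw [hAA _ hus]
        simp only [hus, Bool.false_eq, decide_eq_false_iff_not] at ih
        simp only [Bool.true_eq, decide_eq_true_eq]
        omega
      · have : u (k + s + 1) = false := by
          simpa using fun h => hcons (k + s) (by omega) (by omega) ⟨hus, h⟩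
        simp only [hus, Bool.true_eq, decide_eq_true_eq] at ih
        simp only [this, Bool.false_eq, decide_eq_false_iff_not]
        omega
  have hodd := hpat (k' - k) (by omega) le_rfl
  rw [Nat.add_sub_cancel' hlt.le, hk'.1, Bool.true_eq, decide_eq_true_eq] at hodd
  refine ⟨(k' - k) / 2, by omega, hk, by rwa [show k + 2 * ((k' - k) / 2) + 1 = k' by omega],
    fun s hs₁ hs₂ => hpat s hs₁ (by omega)⟩

lemma HasGap.countBefore_true {k γ : ℕ} (h : HasGap u k γ) :
    countBefore u true (k + 2 * γ + 1) = countBefore u true k + γ + 1 := by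
  have key : ∀ s, s + 1 ≤ 2 * γ + 1 →
      countBefore u true (k + s + 1) = countBefore u true k + 1 + (s + 1) / 2 := by
    intro s hs
    induction s with
    | zero => simp [countBefore_succ, h.1.1]
    | succ s ih =>
      rw [← add_assoc, countBefore_succ, ih (by omega), add_assoc k s 1,
        h.2.2 (s + 1) (by omega) (by omega)]
      rcases Nat.mod_two_eq_zero_or_one (s + 1) with hs' | hs' <;> simp [hs'] <;> omega
  rw [key (2 * γ) le_rfl]
  omega

lemma exists_bb_ge (hap : ¬ EventuallyPeriodic u) (hAA : ∀ k, u k = false → u (k + 1) = true)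
    (N : ℕ) : ∃ k ≥ N, BB u k := by
  by_contra! h
  refine hap (eventuallyPeriodic_of_alternating N fun n hn => ?_)
  cases hun : u n
  · simp [hAA n hun]
  · simpa [hun] using fun h' => h n hn ⟨hun, h'⟩

lemma exists_gaps_between (hAA : ∀ k, u k = false → u (k + 1) = true) {i j : ℕ}
    (hi : BB u i) (hj : BB u j) (hij : i < j) :
    ∃ gs : List ℕ, gs ≠ [] ∧ (∀ γ ∈ gs, ∃ k, HasGap u k γ) ∧
      countBefore u true j = countBefore u true i + gs.sum + gs.length ∧
      j = i + 2 * gs.sum + gs.length := by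
  induction hd : j - i using Nat.strong_induction_on generalizing i with
  | _ d ih =>
    classical
    have hex : ∃ k', i < k' ∧ BB u k' := ⟨j, hij, hj⟩
    obtain ⟨k', ⟨hik', hk'⟩, hmin⟩ :
        ∃ k', (i < k' ∧ BB u k') ∧ ∀ t < k', ¬ (i < t ∧ BB u t) :=
      ⟨Nat.find hex, Nat.find_spec hex, fun _ => Nat.find_min hex⟩
    have hk'j : k' ≤ j := not_lt.mp fun h => hmin j h ⟨hij, hj⟩
    obtain ⟨γ, hγk', hγ⟩ := exists_hasGap_of_consecutive hAA hi hk' hik'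
      fun t ht ht' hbt => hmin t ht' ⟨ht, hbt⟩
    have hcount := hγ.countBefore_true
    rw [← hγk'] at hcount
    rcases hk'j.eq_or_lt with hk'j | hk'j
    · exact ⟨[γ], by simp, by simpa using ⟨i, hγ⟩, by simp [← hk'j, hcount], by simp; omega⟩
    · obtain ⟨gs, -, hgs, hcnt, hlen⟩ := ih (j - k') (by omega) hk' hk'j rfl
      refine ⟨γ :: gs, by simp, ?_, ?_, ?_⟩
      · simpa using ⟨⟨i, hγ⟩, hgs⟩
      · simp only [List.sum_cons, List.length_cons]; omega
      · simp only [List.sum_cons, List.length_cons]; omega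

lemma HasGap.le_add_one (hcomp : ∀ n, complexity u n = n + 1) {k γ κ γ' : ℕ}
    (h : HasGap u k γ) (h' : HasGap u κ γ') : γ' ≤ γ + 1 := by
  by_contra! hlt
  obtain ⟨hk, hk', hpat⟩ := h
  obtain ⟨hκ, hκ', hpat'⟩ := h'
  -- `b (ba)^γ b` and `(ab)^(γ+1)` would be two right special factors of the same length.
  have hne : factorAt u k (2 * γ + 2) ≠ factorAt u (κ + 2) (2 * γ + 2) := fun heq => by
    have := (factorAt_eq_factorAt_iff u).mp heq 0 (by omega)
    rw [add_zero, add_zero, hk.1, hpat' 2 (by omega) (by omega)] at this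
    exact absurd this (by decide)
  refine hne (RightSpecial.eq_of_complexity u (n := 2 * γ + 2) (hcomp _) (hcomp _) ?_ ?_
    (by simp) (by simp))
  · have hocc : factorAt u κ (2 * γ + 2) = factorAt u k (2 * γ + 2) := by
      refine (factorAt_eq_factorAt_iff u).mpr fun s hs => ?_
      rcases Nat.eq_zero_or_pos s with rfl | hs₀
      · rw [add_zero, add_zero, hκ.1, hk.1]
      · rw [hpat' s hs₀ (by omega), hpat s hs₀ (by omega)]
    refine ⟨true, false, by decide, isFactor_factorAt_append u k _ hk'.2, ?_⟩
    rw [← hocc]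
    exact isFactor_factorAt_append u κ _ (by simpa using hpat' (2 * γ + 2) (by omega) (by omega))
  · have hocc : factorAt u (κ + 2 * (γ' - γ)) (2 * γ + 2) = factorAt u (κ + 2) (2 * γ + 2) := by
      refine (factorAt_eq_factorAt_iff u).mpr fun s hs => ?_
      rw [add_assoc, add_assoc, hpat' _ (by omega) (by omega), hpat' _ (by omega) (by omega)]
      congr 2
      omega
    refine ⟨false, true, by decide, isFactor_factorAt_append u (κ + 2) _ ?_, ?_⟩
    · simpa [add_assoc] using hpat' (2 + (2 * γ + 2)) (by omega) (by omega)
    · rw [← hocc]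
      refine isFactor_factorAt_append u _ _ ?_
      rw [show κ + 2 * (γ' - γ) + (2 * γ + 2) = κ + 2 * γ' + 1 + 1 by omega]
      exact hκ'.2

lemma frequently_exists_gaps (hap : ¬ EventuallyPeriodic u)
    (hAA : ∀ k, u k = false → u (k + 1) = true) {k₀ : ℕ} (hk₀ : BB u k₀) :
    ∃ᶠ j in atTop, ∃ gs : List ℕ, (∀ γ ∈ gs, ∃ k, HasGap u k γ) ∧
      countBefore u false j = countBefore u false k₀ + gs.sum ∧
      countBefore u true j = countBefore u true k₀ + gs.sum + gs.length := by
  refine frequently_atTop.mpr fun N => ?_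
  obtain ⟨j, hj, hbb⟩ := exists_bb_ge hap hAA (max N (k₀ + 1))
  obtain ⟨gs, -, hgs, hcount, hlen⟩ := exists_gaps_between hAA hk₀ hbb (by omega)
  refine ⟨j, by omega, gs, hgs, ?_, hcount⟩
  have := countBefore_false_add_true u j
  have := countBefore_false_add_true u k₀
  omega

lemma mul_freq_le_of_forall_hasGap_le (hap : ¬ EventuallyPeriodic u)
    (hAA : ∀ k, u k = false → u (k + 1) = true) {k₀ : ℕ} (hk₀ : BB u k₀) {ρa ρb : ℝ}
    (hfa : HasFreq u false ρa) (hfb : HasFreq u true ρb) {A : ℕ}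
    (hA : ∀ k γ, HasGap u k γ → γ ≤ A) :
    (A + 1) * ρa ≤ A * ρb := by
  have := hfa.mul_le_mul_of_frequently (p := A + 1) (q := A)
    (K := (A + 1) * countBefore u false k₀) hfb <|
    (frequently_exists_gaps hap hAA hk₀).mono fun j ⟨gs, hgs, hfalse, htrue⟩ => by
      have : gs.sum ≤ gs.length * A := List.sum_le_card_nsmul _ _ fun γ hγ => by
        obtain ⟨k, hk⟩ := hgs γ hγ
        exact hA k γ hk
      rw [hfalse, htrue]
      nlinarith
  exact_mod_cast this

lemma mul_freq_le_of_forall_le_hasGap (hap : ¬ EventuallyPeriodic u)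
    (hAA : ∀ k, u k = false → u (k + 1) = true) {k₀ : ℕ} (hk₀ : BB u k₀) {ρa ρb : ℝ}
    (hfa : HasFreq u false ρa) (hfb : HasFreq u true ρb) {A : ℕ}
    (hA : ∀ k γ, HasGap u k γ → A + 1 ≤ γ) :
    (A + 1) * ρb ≤ (A + 2) * ρa := by
  have := hfb.mul_le_mul_of_frequently (p := A + 1) (q := A + 2)
    (K := (A + 1) * countBefore u true k₀) hfa <|
    (frequently_exists_gaps hap hAA hk₀).mono fun j ⟨gs, hgs, hfalse, htrue⟩ => by
      have : gs.length * (A + 1) ≤ gs.sum := List.card_nsmul_le_sum _ _ fun γ hγ => by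
        obtain ⟨k, hk⟩ := hgs γ hγ
        exact hA k γ hk
      rw [hfalse, htrue]
      nlinarith
  exact_mod_cast this

lemma Sturmian.hasGap_bounds (hu : Sturmian u) (hAA : ∀ k, u k = false → u (k + 1) = true)
    {ρa ρb : ℝ} (hfa : HasFreq u false ρa) (hfb : HasFreq u true ρb) {A : ℕ}
    (hlt : A * ρb < (A + 1) * ρa) (hlt' : (A + 2) * ρa < (A + 1) * ρb) {k γ : ℕ}
    (h : HasGap u k γ) : A ≤ γ ∧ γ ≤ A + 1 := by
  constructor
  · by_contra! hγ
    exact hlt.not_ge <| mul_freq_le_of_forall_hasGap_le hu.1 hAA h.1 hfa hfb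
      fun _ _ h' => (h.le_add_one hu.2 h').trans (by omega)
  · by_contra! hγ
    exact hlt'.not_ge <| mul_freq_le_of_forall_le_hasGap hu.1 hAA h.1 hfa hfb
      fun _ _ h' => by have := h'.le_add_one hu.2 h; omega

end Gaps

lemma colourCyc_eq_inr_iff {δ : ℕ} {u : ℕ → Bool} {n : ℕ} {c : ZMod δ} :
    colourCyc δ u n = Sum.inr c ↔ u n = true ∧ (countBefore u true n : ZMod δ) = c := by
  unfold colourCyc colour cyc
  cases u n <;> simp

lemma four_mul_sub_four_lt {δ m σ : ℕ} (hδ : 6 ≤ δ) (hm : m ≠ 0) (h₁ : m * (δ / 2) ≤ σ)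
    (h₂ : σ ≤ m * (δ / 2 + 1)) (hdvd : δ ∣ σ + m) : 4 * δ - 4 < 2 * σ + m := by
  obtain ⟨c, hc⟩ := hdvd
  set A := δ / 2
  have hA : 2 * A ≤ δ ∧ δ ≤ 2 * A + 1 := by omega
  -- `σ + m = δ` is impossible: it is at most `A + 2 < δ` if `m = 1`, and above `δ` if `m ≥ 2`.
  have hc₂ : 2 ≤ c := by
    by_contra! hc'
    rcases Nat.lt_or_ge m 2 with hm₂ | hm₂
    · obtain rfl : m = 1 := by omega
      interval_cases c <;> omega
    · have := Nat.mul_le_mul_right A hm₂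
      interval_cases c <;> omega
  have hδc := Nat.mul_le_mul_left δ hc₂
  zify [show 4 ≤ 4 * δ by omega] at *
  nlinarith

theorem statement10 (δ : ℕ) (hδ : 6 ≤ δ) (u : ℕ → Bool) (hu : IsStandard u)
    (θ : ℝ) (hθ : HasSlope u θ) (a : ℕ → ℕ) (hcf : HasCF θ a)
    (ha1 : a 1 = 1) (ha2 : a 2 = δ / 2)
    (w : List (ZMod δ ⊕ ZMod δ)) (hlen : w.length = 2)
    (hw : ∀ x ∈ w, ∃ c : ZMod δ, x = Sum.inr c)
    (i j : ℕ) (hij : i < j)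
    (hi : OccursAt (colourCyc δ u) w i) (hj : OccursAt (colourCyc δ u) w j) :
    4 * δ - 4 < j - i := by
  have hst := hu.1
  obtain ⟨ρa, ρb, hfa, hfb, hab, hlt, hlt'⟩ := hθ.exists_freq_bounds hcf ha1
  have hAA := fun k => hst.succ_eq_true_of_eq_false hfa hfb hab (k := k)
  obtain ⟨x₀, x₁, rfl⟩ := List.length_eq_two.mp hlen
  obtain ⟨c₀, rfl⟩ := hw x₀ (by simp)
  obtain ⟨c₁, rfl⟩ := hw x₁ (by simp)
  simp only [OccursAt, hlen, factorAt_two, List.cons.injEq, colourCyc_eq_inr_iff, and_true] at hi hj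
  obtain ⟨gs, hgs, hgaps, hcount, hdist⟩ :=
    exists_gaps_between hAA ⟨hi.1.1, hi.2.1⟩ ⟨hj.1.1, hj.2.1⟩ hij
  have hbounds : ∀ γ ∈ gs, δ / 2 ≤ γ ∧ γ ≤ δ / 2 + 1 := fun γ hγ => by
    obtain ⟨k, hk⟩ := hgaps γ hγ
    rw [← ha2]
    exact hst.hasGap_bounds hAA hfa hfb hlt hlt' hk
  have hdvd : δ ∣ gs.sum + gs.length := by
    have : ((countBefore u true i + (gs.sum + gs.length) : ℕ) : ZMod δ) =
        countBefore u true i := by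
      rw [← add_assoc, ← hcount, hi.1.2, hj.1.2]
    rwa [Nat.cast_add, add_eq_left, ZMod.natCast_eq_zero_iff] at this
  have := four_mul_sub_four_lt hδ (by simpa using hgs)
    (List.card_nsmul_le_sum _ _ fun γ hγ => (hbounds γ hγ).1)
    (List.sum_le_card_nsmul _ _ fun γ hγ => (hbounds γ hγ).2) hdvd
  omega

end BalancedCE
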